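/- Let H be a length heart in a triangulated category D, S a subset of the simple objects of H, and K = (S^⊥ ∩ H) * ⟨S⟩[-1] the right simple tilt of H at S. Then for each s ∈ S, the object s[-1] is a simple object of the abelian category K. -/

import Mathlib

/-!
Write `H` for the heart and `X` for the aisle. Subobjects are tested against `X`: a morphism `j`
of `H` is a monomorphism of `H` exactly when no nonzero map from an object of `X` is killed by
`j` (`IsMonoWrt X j`), and this condition makes sense for any morphism of the ambient category.

Let `a → s[-1] → b → a[1]` be a distinguished triangle with `a, b ∈ K`. Since
`Hom(X, b[-1]) = 0`, the map `a → s[-1]` is a monomorphism in this sense, and as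
`Hom(X, s[-1]) = 0` the `S^⊥`-part of `a` vanishes: `a[1] ∈ ⟨S⟩`. Likewise `b → a[1]` is a
monomorphism, and an object of `⟨S⟩` has no nonzero subobject in `S^⊥ ∩ H` (induction along
its `S`-filtration, intersecting with the first step via a kernel in `H`), so `b[1] ∈ ⟨S⟩` too.
Shifting by one gives a short exact sequence `a[1] ↪ s ↠ b[1]` in `H`, and simplicity of `s`
forces `a = 0` or `b = 0`.
-/

open CategoryTheory Category Limits Pretriangulated

universe v u

namespace SMPaper

variable {C : Type u} [Category.{v} C] [Preadditive C] [HasZeroObject C] [HasShift C ℤ]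
  [∀ n : ℤ, (shiftFunctor C n).Additive] [Pretriangulated C]

/-- The image of a set of objects under the `n`-th shift, closed under isomorphism. -/
def shiftSet (S : Set C) (n : ℤ) : Set C :=
  {d | ∃ s ∈ S, Nonempty ((shiftFunctor C n).obj s ≅ d)}

/-- The extension product `A * B`: objects `d` fitting in a triangle `a → d → b → a[1]`. -/
def star (A B : Set C) : Set C :=
  {d | ∃ (a b : C) (f : a ⟶ d) (g : d ⟶ b) (h : b ⟶ (shiftFunctor C (1 : ℤ)).obj a),
    a ∈ A ∧ b ∈ B ∧ Triangle.mk f g h ∈ (distTriang C)}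

/-- `Hom(A, B) = 0`. -/
def homOrth (A B : Set C) : Prop :=
  ∀ ⦃a : C⦄, a ∈ A → ∀ ⦃b : C⦄, b ∈ B → ∀ f : a ⟶ b, f = 0

/-- Right perpendicular `S^⊥`. -/
def rPerp (S : Set C) : Set C := {d | ∀ s ∈ S, ∀ f : s ⟶ d, f = 0}

/-- Left perpendicular `^⊥S`. -/
def lPerp (S : Set C) : Set C := {d | ∀ s ∈ S, ∀ f : d ⟶ s, f = 0}

def isoClosure (S : Set C) : Set C := {d | ∃ s ∈ S, Nonempty (s ≅ d)}

/-- The extension closure of a set of objects. -/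
inductive ExtClosureP (S : Set C) : C → Prop
  | of (s : C) : s ∈ S → ExtClosureP S s
  | zero (z : C) : IsZero z → ExtClosureP S z
  | iso (x y : C) : (x ≅ y) → ExtClosureP S x → ExtClosureP S y
  | ext (a d b : C) (f : a ⟶ d) (g : d ⟶ b) (h : b ⟶ (shiftFunctor C (1 : ℤ)).obj a) :
      Triangle.mk f g h ∈ (distTriang C) → ExtClosureP S a → ExtClosureP S b → ExtClosureP S d

def extClosure (S : Set C) : Set C := {d | ExtClosureP S d}

/-- `⟨S⟩[i] * ⟨S⟩[i-1] * ⋯ * ⟨S⟩[i-n]`. -/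
def prodDown (S : Set C) : ℤ → ℕ → Set C
  | i, 0 => shiftSet (extClosure S) i
  | i, n + 1 => star (shiftSet (extClosure S) i) (prodDown S (i - 1) n)

/-- `susp S = ⋃_{n ≥ 0} ⟨S⟩[n] * ⋯ * ⟨S⟩[0]`. -/
def suspSet (S : Set C) : Set C := {d | ∃ n : ℕ, d ∈ prodDown S n n}

/-- `cosusp S = ⋃_{n ≥ 0} ⟨S⟩[0] * ⋯ * ⟨S⟩[-n]`. -/
def cosuspSet (S : Set C) : Set C := {d | ∃ n : ℕ, d ∈ prodDown S 0 n}

/-- `cosusp (S[-1]) = ⋃_{n ≥ 0} ⟨S⟩[-1] * ⋯ * ⟨S⟩[-1-n]`. -/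
def cosuspNeg (S : Set C) : Set C := {d | ∃ n : ℕ, d ∈ prodDown S (-1) n}

/-- A t-structure `(X, Y)`: full (iso-closed, containing zero) subcategories with
`Hom(X, Y) = 0`, `D = X * Y` and `X[1] ⊆ X`. -/
structure IsTStructure (X Y : Set C) : Prop where
  isoX : ∀ ⦃x y : C⦄, (x ≅ y) → x ∈ X → y ∈ X
  isoY : ∀ ⦃x y : C⦄, (x ≅ y) → x ∈ Y → y ∈ Y
  zeroX : ∀ z : C, IsZero z → z ∈ X
  zeroY : ∀ z : C, IsZero z → z ∈ Y
  hom : homOrth X Y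
  gen : ∀ d : C, d ∈ star X Y
  shift : shiftSet X 1 ⊆ X

/-- A co-t-structure `(W, X)`. -/
structure IsCoTStructure (W X : Set C) : Prop where
  isoW : ∀ ⦃x y : C⦄, (x ≅ y) → x ∈ W → y ∈ W
  isoX : ∀ ⦃x y : C⦄, (x ≅ y) → x ∈ X → y ∈ X
  zeroW : ∀ z : C, IsZero z → z ∈ W
  zeroX : ∀ z : C, IsZero z → z ∈ X
  hom : homOrth W X
  gen : ∀ d : C, d ∈ star W X
  shift : shiftSet W (-1) ⊆ W

/-- The heart `X ∩ Y[1]` of a t-structure. -/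
def heart (X Y : Set C) : Set C := X ∩ shiftSet Y 1

/-- Boundedness of a torsion pair/t-structure. -/
def IsBoundedTS (X Y : Set C) : Prop :=
  ∀ d : C, (∃ n : ℤ, d ∈ shiftSet X n) ∧ (∃ n : ℤ, d ∈ shiftSet Y n)

/-- A torsion pair `(T, F)` in the heart `H`: `Hom(T, F) = 0` and every object of `H`
is an extension of an object of `F` by an object of `T`. -/
structure IsTorsionPairIn (H T F : Set C) : Prop where
  isoT : ∀ ⦃x y : C⦄, (x ≅ y) → x ∈ T → y ∈ T
  isoF : ∀ ⦃x y : C⦄, (x ≅ y) → x ∈ F → y ∈ F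
  subT : T ⊆ H
  subF : F ⊆ H
  hom : homOrth T F
  gen : H ⊆ star T F

/-- `f : x → d` is a right `S`-approximation. -/
def IsRightApprox (S : Set C) {x d : C} (f : x ⟶ d) : Prop :=
  x ∈ S ∧ ∀ ⦃x' : C⦄, x' ∈ S → ∀ g : x' ⟶ d, ∃ h : x' ⟶ x, h ≫ f = g

/-- `f : d → x` is a left `S`-approximation. -/
def IsLeftApprox (S : Set C) {d x : C} (f : d ⟶ x) : Prop :=
  x ∈ S ∧ ∀ ⦃x' : C⦄, x' ∈ S → ∀ g : d ⟶ x', ∃ h : x ⟶ x', f ≫ h = g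

def RightMinimal {x d : C} (f : x ⟶ d) : Prop :=
  ∀ β : x ⟶ x, β ≫ f = f → IsIso β

def LeftMinimal {d x : C} (f : d ⟶ x) : Prop :=
  ∀ β : x ⟶ x, f ≫ β = f → IsIso β

def HasRightApprox (S : Set C) (d : C) : Prop := ∃ (x : C) (f : x ⟶ d), IsRightApprox S f

def HasLeftApprox (S : Set C) (d : C) : Prop := ∃ (x : C) (f : d ⟶ x), IsLeftApprox S f

def ContravariantlyFiniteIn (S A : Set C) : Prop := ∀ d ∈ A, HasRightApprox S d

def CovariantlyFiniteIn (S A : Set C) : Prop := ∀ d ∈ A, HasLeftApprox S d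

/-- An orthogonal collection (semibrick). -/
structure IsOrthogonal (U : Set C) : Prop where
  nonzero : ∀ u ∈ U, ¬ IsZero u
  hom : ∀ ⦃u v : C⦄, u ∈ U → v ∈ U → ¬ Nonempty (u ≅ v) → ∀ f : u ⟶ v, f = 0
  div : ∀ u ∈ U, ∀ f : u ⟶ u, f = 0 ∨ IsIso f

/-- An `∞`-orthogonal collection. -/
def IsInfOrthogonal (U : Set C) : Prop :=
  IsOrthogonal U ∧ ∀ ⦃u v : C⦄, u ∈ U → v ∈ U → ∀ m : ℤ, 0 < m →
    ∀ f : (shiftFunctor C m).obj u ⟶ v, f = 0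

/-- A simple-minded collection. -/
def IsSMC (U : Set C) : Prop :=
  IsInfOrthogonal U ∧ ∀ d : C, ∃ i j : ℤ, j ≤ i ∧ d ∈ prodDown U i (i - j).toNat

/-- `m` is a right mutation `∂_S(d)` of `d` with respect to `S`. -/
def IsRightMutation (S : Set C) (d m : C) : Prop :=
  (d ∈ S ∧ Nonempty (d ≅ m)) ∨
  (d ∉ S ∧ ∃ (s : C) (f : s ⟶ (shiftFunctor C (1 : ℤ)).obj d)
      (g : (shiftFunctor C (1 : ℤ)).obj d ⟶ m) (h : m ⟶ (shiftFunctor C (1 : ℤ)).obj s),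
    IsRightApprox (extClosure S) f ∧ RightMinimal f ∧ Triangle.mk f g h ∈ (distTriang C))

/-- `m` is a left mutation `∂⁻_S(d)` of `d` with respect to `S`. -/
def IsLeftMutation (S : Set C) (d m : C) : Prop :=
  (d ∈ S ∧ Nonempty (d ≅ m)) ∨
  (d ∉ S ∧ ∃ (s : C) (g : m ⟶ (shiftFunctor C (-1 : ℤ)).obj d)
      (f : (shiftFunctor C (-1 : ℤ)).obj d ⟶ s) (h : s ⟶ (shiftFunctor C (1 : ℤ)).obj m),
    IsLeftApprox (extClosure S) f ∧ LeftMinimal f ∧ Triangle.mk g f h ∈ (distTriang C))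

def rightMutationSet (S U : Set C) : Set C := {m | ∃ u ∈ U, IsRightMutation S u m}

def leftMutationSet (S U : Set C) : Set C := {m | ∃ u ∈ U, IsLeftMutation S u m}

/-- `h` is a simple object of the heart `H`. -/
def IsSimpleIn (H : Set C) (h : C) : Prop :=
  h ∈ H ∧ ¬ IsZero h ∧
    ∀ (a b : C) (f : a ⟶ h) (g : h ⟶ b) (w : b ⟶ (shiftFunctor C (1 : ℤ)).obj a),
      a ∈ H → b ∈ H → Triangle.mk f g w ∈ (distTriang C) → IsZero a ∨ IsZero b

def simplesOf (H : Set C) : Set C := {h | IsSimpleIn H h}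

/-- A heart is a length category iff every object has a finite composition series, i.e.
lies in the extension closure of the simple objects. -/
def HeartIsLength (H : Set C) : Prop := H ⊆ extClosure (simplesOf H)

/-- A bounded t-structure with length heart. -/
def IsLengthHeart (X Y : Set C) : Prop :=
  IsTStructure X Y ∧ IsBoundedTS X Y ∧ HeartIsLength (heart X Y)

/-- An `S`-mutation pair `(A, B)`. -/
def IsSMutationPair (S A B : Set C) : Prop :=
  isoClosure A =
    lPerp S ∩ rPerp S ∩ lPerp (shiftSet S (-1)) ∩ shiftSet (star (extClosure S) B) (-1) ∧
  isoClosure B =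
    lPerp S ∩ rPerp S ∩ rPerp (shiftSet S 1) ∩ shiftSet (star A (extClosure S)) 1

/-- The conditions of the SMC Setup. -/
def SMCSetup (S : Set C) : Prop :=
  CovariantlyFiniteIn (extClosure S)
    {d | ∀ s ∈ S, ∀ m : ℤ, m < 0 → ∀ f : d ⟶ (shiftFunctor C m).obj s, f = 0} ∧
  ContravariantlyFiniteIn (extClosure S)
    {d | ∀ s ∈ S, ∀ m : ℤ, 0 < m → ∀ f : (shiftFunctor C m).obj s ⟶ d, f = 0} ∧
  (∀ d : C, ∃ N : ℤ, ∀ m : ℤ, m ≤ N → ∀ s ∈ S, ∀ f : d ⟶ (shiftFunctor C m).obj s, f = 0) ∧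
  (∀ d : C, ∃ N : ℤ, ∀ m : ℤ, N ≤ m → ∀ s ∈ S, ∀ f : (shiftFunctor C m).obj s ⟶ d, f = 0)

/-- `f : p → h` is an epimorphism in the heart `H`, i.e. fits in a triangle
`a → p → h → a[1]` with `a ∈ H`. -/
def IsEpiIn (H : Set C) {p h : C} (f : p ⟶ h) : Prop :=
  ∃ (a : C) (i : a ⟶ p) (w : h ⟶ (shiftFunctor C (1 : ℤ)).obj a),
    a ∈ H ∧ Triangle.mk i f w ∈ (distTriang C)

/-- `f : h → i` is a monomorphism in the heart `H`. -/
def IsMonoIn (H : Set C) {h i : C} (f : h ⟶ i) : Prop :=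
  ∃ (b : C) (q : i ⟶ b) (w : b ⟶ (shiftFunctor C (1 : ℤ)).obj h),
    b ∈ H ∧ Triangle.mk f q w ∈ (distTriang C)

def IsProjectiveIn (H : Set C) (p : C) : Prop :=
  p ∈ H ∧ ∀ ⦃x y : C⦄ (f : x ⟶ y), x ∈ H → y ∈ H → IsEpiIn H f →
    ∀ g : p ⟶ y, ∃ l : p ⟶ x, l ≫ f = g

def IsInjectiveIn (H : Set C) (i : C) : Prop :=
  i ∈ H ∧ ∀ ⦃x y : C⦄ (f : x ⟶ y), x ∈ H → y ∈ H → IsMonoIn H f →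
    ∀ g : x ⟶ i, ∃ l : y ⟶ i, f ≫ l = g

def EnoughProjectivesIn (H : Set C) : Prop :=
  ∀ h ∈ H, ∃ (p : C) (f : p ⟶ h), IsProjectiveIn H p ∧ IsEpiIn H f

def EnoughInjectivesIn (H : Set C) : Prop :=
  ∀ h ∈ H, ∃ (i : C) (f : h ⟶ i), IsInjectiveIn H i ∧ IsMonoIn H f

section Preadditive

omit [HasZeroObject C] [HasShift C ℤ] [∀ n : ℤ, (shiftFunctor C n).Additive]
  [Pretriangulated C]

variable {A : Set C}

lemma mem_rPerp_of_iso {d d' : C} (e : d ≅ d') (hd : d ∈ rPerp A) : d' ∈ rPerp A := by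
  intro a ha f
  rw [← cancel_mono e.inv, hd a ha (f ≫ e.inv), zero_comp]

lemma isZero_of_mem_rPerp {d : C} (hd : d ∈ A) (hd' : d ∈ rPerp A) : IsZero d :=
  (IsZero.iff_id_eq_zero d).2 (hd' d hd _)

def IsMonoWrt (A : Set C) {z t : C} (j : z ⟶ t) : Prop :=
  ∀ ⦃x : C⦄, x ∈ A → ∀ q : x ⟶ z, q ≫ j = 0 → q = 0

namespace IsMonoWrt

variable {z t u : C}

lemma of_mono (j : z ⟶ t) [Mono j] : IsMonoWrt A j :=
  fun _ _ q hq => (cancel_mono j).1 (by rw [hq, zero_comp])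

lemma comp {j : z ⟶ t} {k : t ⟶ u} (hj : IsMonoWrt A j) (hk : IsMonoWrt A k) :
    IsMonoWrt A (j ≫ k) :=
  fun _ hx q hq => hj hx q (hk hx _ (by rw [assoc, hq]))

lemma of_comp {j : z ⟶ t} {k : t ⟶ u} (h : IsMonoWrt A (j ≫ k)) : IsMonoWrt A j :=
  fun _ hx q hq => h hx q (by rw [← assoc, hq, zero_comp])

lemma mem_rPerp_of_eq_zero {j : z ⟶ t} (hj : IsMonoWrt A j) (h : j = 0) : z ∈ rPerp A :=
  fun _ hx q => hj hx q (by rw [h, comp_zero])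

lemma mem_rPerp {S : Set C} {j : z ⟶ t} (hj : IsMonoWrt A j) (hSA : S ⊆ A)
    (ht : t ∈ rPerp S) : z ∈ rPerp S :=
  fun s hs q => hj (hSA hs) q (ht s hs _)

end IsMonoWrt

def HasNoSubobjectIn (A T : Set C) (d : C) : Prop :=
  ∀ ⦃z : C⦄, z ∈ T → ∀ j : z ⟶ d, IsMonoWrt A j → IsZero z

lemma hasNoSubobjectIn_of_mem_rPerp {T : Set C} {d : C} (hTA : T ⊆ A) (hd : d ∈ rPerp A) :
    HasNoSubobjectIn A T d :=
  fun z hz j hj => isZero_of_mem_rPerp (hTA hz) (hj.mem_rPerp_of_eq_zero (hd z (hTA hz) j))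

lemma HasNoSubobjectIn.of_isMonoWrt {T : Set C} {d d' : C} (h : HasNoSubobjectIn A T d)
    {φ : d' ⟶ d} (hφ : IsMonoWrt A φ) : HasNoSubobjectIn A T d' :=
  fun _ hz j hj => h hz (j ≫ φ) (hj.comp hφ)

end Preadditive

section Triangle

variable {A : Set C} {T : Triangle C}

lemma mem_rPerp_obj₂ (hT : T ∈ distTriang C) (h₁ : T.obj₁ ∈ rPerp A)
    (h₃ : T.obj₃ ∈ rPerp A) : T.obj₂ ∈ rPerp A := by
  intro a ha f
  obtain ⟨g, rfl⟩ := Triangle.coyoneda_exact₂ _ hT f (h₃ a ha _)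
  rw [h₁ a ha g, zero_comp]

lemma mem_lPerp_obj₂ (hT : T ∈ distTriang C) (h₁ : T.obj₁ ∈ lPerp A)
    (h₃ : T.obj₃ ∈ lPerp A) : T.obj₂ ∈ lPerp A := by
  intro a ha f
  obtain ⟨g, rfl⟩ := Triangle.yoneda_exact₂ _ hT f (h₁ a ha _)
  rw [h₃ a ha g, comp_zero]

lemma isMonoWrt_mor₂ (hT : T ∈ distTriang C) (h : T.obj₁ ∈ rPerp A) :
    IsMonoWrt A T.mor₂ := by
  intro x hx q hq
  obtain ⟨r, rfl⟩ := Triangle.coyoneda_exact₂ _ hT q hq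
  rw [h x hx r, zero_comp]

lemma isMonoWrt_mor₁ (hT : T ∈ distTriang C) (h : T.obj₃⟦(-1 : ℤ)⟧ ∈ rPerp A) :
    IsMonoWrt A T.mor₁ :=
  isMonoWrt_mor₂ (inv_rot_of_distTriang _ hT) h

lemma isMonoWrt_mor₃ (hT : T ∈ distTriang C) (h : T.obj₂ ∈ rPerp A) :
    IsMonoWrt A T.mor₃ :=
  isMonoWrt_mor₂ (rot_of_distTriang _ hT) h

end Triangle

omit [Preadditive C] [HasZeroObject C] [∀ n : ℤ, (shiftFunctor C n).Additive]
  [Pretriangulated C] in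
lemma shiftSet_mono {A B : Set C} (h : A ⊆ B) (n : ℤ) : shiftSet A n ⊆ shiftSet B n := by
  rintro d ⟨a, ha, e⟩
  exact ⟨a, h ha, e⟩

lemma star_mono {A A' B B' : Set C} (hA : A ⊆ A') (hB : B ⊆ B') : star A B ⊆ star A' B' := by
  rintro d ⟨a, b, f, g, h, ha, hb, hD⟩
  exact ⟨a, b, f, g, h, hA ha, hB hb, hD⟩

open ZeroObject in
lemma mem_star_of_mem_right {A B : Set C} {b : C} (hA : ∀ z : C, IsZero z → z ∈ A)
    (hb : b ∈ B) : b ∈ star A B :=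
  ⟨0, b, 0, 𝟙 b, 0, hA _ (isZero_zero C), hb, contractible_distinguished₁ b⟩

lemma IsSimpleIn.isZero_or_isZero {H : Set C} {s : C} (hs : IsSimpleIn H s) {T : Triangle C}
    (hT : T ∈ distTriang C) (e : T.obj₂ ≅ s) (h₁ : T.obj₁ ∈ H) (h₃ : T.obj₃ ∈ H) :
    IsZero T.obj₁ ∨ IsZero T.obj₃ :=
  hs.2.2 _ _ (T.mor₁ ≫ e.hom) (e.inv ≫ T.mor₂) T.mor₃ h₁ h₃ <|
    isomorphic_distinguished _ hT _ <|
      Triangle.isoMk _ _ (Iso.refl _) e.symm (Iso.refl _)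
        (show (T.mor₁ ≫ e.hom) ≫ e.inv = 𝟙 T.obj₁ ≫ T.mor₁ by
          rw [assoc, e.hom_inv_id, comp_id, id_comp])
        (show (e.inv ≫ T.mor₂) ≫ 𝟙 T.obj₃ = e.inv ≫ T.mor₂ from comp_id _)
        (show T.mor₃ ≫ (𝟙 T.obj₁)⟦(1 : ℤ)⟧' = 𝟙 T.obj₃ ≫ T.mor₃ by simp)

namespace IsTStructure

variable {X Y : Set C}

lemma subset_lPerp (hT : IsTStructure X Y) : X ⊆ lPerp Y :=
  fun _ hx _ hy f => hT.hom hx hy f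

lemma shift_mem (hT : IsTStructure X Y) {n : ℤ} (hn : 0 ≤ n) {x : C} (hx : x ∈ X) :
    x⟦n⟧ ∈ X := by
  induction n, hn using Int.leInduction with
  | base => exact hT.isoX ((shiftFunctorZero C ℤ).symm.app x) hx
  | succ k _ ih =>
    exact hT.isoX ((shiftFunctorAdd' C k 1 (k + 1) rfl).symm.app x)
      (hT.shift ⟨_, ih, ⟨Iso.refl _⟩⟩)

lemma shift_mem_rPerp (hT : IsTStructure X Y) {y : C} (hy : y ∈ Y) {n : ℤ} (hn : n ≤ 0) :
    y⟦n⟧ ∈ rPerp X := by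
  intro x hx f
  have e : (y⟦n⟧)⟦-n⟧ ≅ y := (shiftFunctorCompIsoId C n (-n) (add_neg_cancel n)).app y
  apply (shiftFunctor C (-n)).map_injective
  rw [Functor.map_zero, ← cancel_mono e.hom, zero_comp]
  exact hT.hom (hT.shift_mem (by omega) hx) hy _

lemma shift_mem_rPerp_of_mem_heart (hT : IsTStructure X Y) {h : C} (hh : h ∈ heart X Y)
    {n : ℤ} (hn : n < 0) : h⟦n⟧ ∈ rPerp X := by
  obtain ⟨-, y, hy, ⟨e⟩⟩ := hh
  exact mem_rPerp_of_iso
    ((shiftFunctorAdd' C 1 n (1 + n) rfl).app y ≪≫ (shiftFunctor C n).mapIso e)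
    (hT.shift_mem_rPerp hy (by omega))

lemma shift_mem_rPerp_of_mem_shiftSet_heart (hT : IsTStructure X Y) {d : C}
    (hd : d ∈ shiftSet (heart X Y) (-1)) : d⟦(-1 : ℤ)⟧ ∈ rPerp X := by
  obtain ⟨h, hh, ⟨e⟩⟩ := hd
  exact mem_rPerp_of_iso ((shiftFunctorAdd' C (-1) (-1) (-2) rfl).app h ≪≫
    (shiftFunctor C (-1)).mapIso e) (hT.shift_mem_rPerp_of_mem_heart hh (by norm_num))

lemma shift_mem_rPerp_of_mem_star (hT : IsTStructure X Y) {d : C}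
    (hd : d ∈ star (heart X Y) (shiftSet (heart X Y) (-1))) : d⟦(-1 : ℤ)⟧ ∈ rPerp X := by
  obtain ⟨a, b, f, g, h, ha, hb, hD⟩ := hd
  exact mem_rPerp_obj₂ (Triangle.shift_distinguished _ hD (-1))
    (hT.shift_mem_rPerp_of_mem_heart ha (by norm_num))
    (hT.shift_mem_rPerp_of_mem_shiftSet_heart hb)

lemma lPerp_subset (hT : IsTStructure X Y) : lPerp Y ⊆ X := by
  intro d hd
  obtain ⟨x, y, f, g, h, hx, hy, hD⟩ := hT.gen d
  have hy0 : IsZero y := by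
    obtain ⟨k, hk⟩ := Triangle.yoneda_exact₂ _ (rot_of_distTriang _ hD) (𝟙 y)
      ((comp_id g).trans (hd y hy g))
    have hk0 : k = 0 := hT.hom (hT.shift_mem zero_le_one hx) hy k
    rw [IsZero.iff_id_eq_zero, hk, hk0]
    exact comp_zero
  have : IsIso f := (Triangle.isZero₃_iff_isIso₁ _ hD).1 hy0
  exact hT.isoX (asIso f) hx

lemma rPerp_subset (hT : IsTStructure X Y) : rPerp X ⊆ Y := by
  intro d hd
  obtain ⟨x, y, f, g, h, hx, hy, hD⟩ := hT.gen d
  have hf : IsMonoWrt X f := isMonoWrt_mor₁ hD (hT.shift_mem_rPerp hy (by norm_num))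
  have : IsIso g := (Triangle.isZero₁_iff_isIso₂ _ hD).1
    (isZero_of_mem_rPerp hx (hf.mem_rPerp_of_eq_zero (hd x hx f)))
  exact hT.isoY (asIso g).symm hy

lemma mem_heart (hT : IsTStructure X Y) {d : C} (hd : d ∈ lPerp Y)
    (hd' : d⟦(-1 : ℤ)⟧ ∈ rPerp X) : d ∈ heart X Y :=
  ⟨hT.lPerp_subset hd, _, hT.rPerp_subset hd',
    ⟨(shiftFunctorCompIsoId C (-1) 1 (by norm_num)).app d⟩⟩

lemma mem_heart_of_isZero (hT : IsTStructure X Y) {z : C} (hz : IsZero z) : z ∈ heart X Y :=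
  hT.mem_heart (fun _ _ f => hz.eq_of_src f 0)
    (fun _ _ f => ((shiftFunctor C (-1)).map_isZero hz).eq_of_tgt f 0)

lemma mem_heart_of_iso (hT : IsTStructure X Y) {d d' : C} (e : d ≅ d') (hd : d ∈ heart X Y) :
    d' ∈ heart X Y := by
  obtain ⟨hdX, y, hy, ⟨e'⟩⟩ := hd
  exact ⟨hT.isoX e hdX, y, hy, ⟨e' ≪≫ e⟩⟩

lemma mem_heart_obj₂ (hT : IsTStructure X Y) {T : Triangle C} (hD : T ∈ distTriang C)
    (h₁ : T.obj₁ ∈ heart X Y) (h₃ : T.obj₃ ∈ heart X Y) : T.obj₂ ∈ heart X Y :=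
  hT.mem_heart (mem_lPerp_obj₂ hD (hT.subset_lPerp h₁.1) (hT.subset_lPerp h₃.1))
    (mem_rPerp_obj₂ (Triangle.shift_distinguished T hD (-1))
      (hT.shift_mem_rPerp_of_mem_heart h₁ (by norm_num))
      (hT.shift_mem_rPerp_of_mem_heart h₃ (by norm_num)))

lemma mem_heart_obj₃ (hT : IsTStructure X Y) {T : Triangle C} (hD : T ∈ distTriang C)
    (h₁ : T.obj₁ ∈ heart X Y) (h₂ : T.obj₂ ∈ heart X Y) (hmono : IsMonoWrt X T.mor₁) :
    T.obj₃ ∈ heart X Y := by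
  refine hT.mem_heart (mem_lPerp_obj₂ (rot_of_distTriang _ hD) (hT.subset_lPerp h₂.1)
    (hT.subset_lPerp (hT.shift_mem zero_le_one h₁.1))) ?_
  have hD' := inv_rot_of_distTriang _ hD
  exact ((isMonoWrt_mor₁ hD' (hT.shift_mem_rPerp_of_mem_heart h₂ (by norm_num))).comp
    hmono).mem_rPerp_of_eq_zero (comp_distTriang_mor_zero₁₂ _ hD')

lemma extClosure_subset_heart (hT : IsTStructure X Y) {S : Set C} (hS : S ⊆ heart X Y) :
    extClosure S ⊆ heart X Y := by
  intro t ht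
  induction ht with
  | of s hs => exact hS hs
  | zero z hz => exact hT.mem_heart_of_isZero hz
  | iso x y e _ ih => exact hT.mem_heart_of_iso e ih
  | ext a d b f g h hD _ _ iha ihb => exact hT.mem_heart_obj₂ hD iha ihb

lemma mem_heart_of_isMonoWrt (hT : IsTStructure X Y) {k z : C} {κ : k ⟶ z}
    (hκ : IsMonoWrt X κ) (hk : k ∈ X) (hz : z ∈ heart X Y) : k ∈ heart X Y := by
  refine hT.mem_heart (hT.subset_lPerp hk) fun x hx q => ?_
  let e := shiftFunctorCompIsoId C (-1 : ℤ) 1 (by norm_num)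
  have hq : q⟦(1 : ℤ)⟧' ≫ e.hom.app k = 0 := by
    refine hκ (hT.shift_mem zero_le_one hx) _ ?_
    have hnat : e.hom.app k ≫ κ = (κ⟦(-1 : ℤ)⟧')⟦(1 : ℤ)⟧' ≫ e.hom.app z :=
      (e.hom.naturality κ).symm
    rw [assoc, hnat, ← assoc, ← Functor.map_comp,
      hT.shift_mem_rPerp_of_mem_heart hz (by norm_num) x hx (q ≫ κ⟦(-1 : ℤ)⟧'),
      Functor.map_zero, zero_comp]
  apply (shiftFunctor C (1 : ℤ)).map_injective
  rw [Functor.map_zero, ← cancel_mono (e.hom.app k), hq, zero_comp]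

lemma exists_kernel (hT : IsTStructure X Y) {z t : C} (φ : z ⟶ t) (hz : z ∈ heart X Y)
    (ht : t ∈ heart X Y) :
    ∃ (k : C) (κ : k ⟶ z), k ∈ heart X Y ∧ IsMonoWrt X κ ∧ κ ≫ φ = 0 ∧
      ∀ ⦃x : C⦄, x ∈ X → ∀ q : x ⟶ z, q ≫ φ = 0 → ∃ r, r ≫ κ = q := by
  obtain ⟨c, δ, w, hD⟩ := distinguished_cocone_triangle₁ φ
  obtain ⟨k, y, α, β, γ, hk, hy, hG⟩ := hT.gen c
  have hκ : IsMonoWrt X (α ≫ δ) :=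
    (isMonoWrt_mor₁ hG (hT.shift_mem_rPerp hy (by norm_num))).comp
      (isMonoWrt_mor₁ hD (hT.shift_mem_rPerp_of_mem_heart ht (by norm_num)))
  refine ⟨k, α ≫ δ, hT.mem_heart_of_isMonoWrt hκ hk hz, hκ,
    by rw [assoc, show δ ≫ φ = 0 from comp_distTriang_mor_zero₁₂ _ hD, comp_zero],
    fun x hx q hq => ?_⟩
  obtain ⟨q', rfl⟩ := Triangle.coyoneda_exact₂ _ hD q hq
  obtain ⟨r, rfl⟩ := Triangle.coyoneda_exact₂ _ hG q' (hT.hom hx hy _)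
  exact ⟨r, (assoc _ _ _).symm⟩

lemma hasNoSubobjectIn_of_mem_extClosure (hT : IsTStructure X Y) {S : Set C}
    (hS : S ⊆ simplesOf (heart X Y)) {t : C} (ht : t ∈ extClosure S) :
    HasNoSubobjectIn X (rPerp S ∩ heart X Y) t := by
  have hSH : S ⊆ heart X Y := fun s hs => (hS hs).1
  induction ht with
  | of s hs =>
    rintro z ⟨hzS, hz⟩ j hj
    obtain ⟨c, g, w, hD⟩ := distinguished_cocone_triangle j
    rcases (hS hs).2.2 z c j g w hz (hT.mem_heart_obj₃ hD hz (hSH hs) hj) hD with hz0 | hc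
    · exact hz0
    · have : IsIso j := (Triangle.isZero₃_iff_isIso₁ _ hD).1 hc
      rw [IsZero.iff_id_eq_zero, ← IsIso.hom_inv_id j, hzS s hs (inv j), comp_zero]
  | zero t ht =>
    exact hasNoSubobjectIn_of_mem_rPerp (fun _ h => h.2.1) fun _ _ f => ht.eq_of_tgt f 0
  | iso t t' e _ ih => exact ih.of_isMonoWrt (IsMonoWrt.of_mono e.inv)
  | ext t₁ t t₂ i p _ hE _ h₂ ih₁ ih₂ =>
    rintro z ⟨hzS, hz⟩ j hj
    obtain ⟨k, κ, hk, hκ, hκp, hfac⟩ :=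
      hT.exists_kernel (j ≫ p) hz (hT.extClosure_subset_heart hSH h₂)
    -- `k` is `z ∩ t₁`, the kernel of `z → t₂`
    obtain ⟨m, hm⟩ : ∃ m : k ⟶ t₁, κ ≫ j = m ≫ i :=
      Triangle.coyoneda_exact₂ _ hE (κ ≫ j) (show (κ ≫ j) ≫ p = 0 by rwa [assoc])
    have hm' : IsMonoWrt X m := by
      refine IsMonoWrt.of_comp (k := i) ?_
      rw [← hm]
      exact hκ.comp hj
    have hk0 : IsZero k := ih₁ ⟨hκ.mem_rPerp (fun s hs => (hSH hs).1) hzS, hk⟩ m hm'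
    refine ih₂ ⟨hzS, hz⟩ (j ≫ p) fun x hx q hq => ?_
    obtain ⟨r, rfl⟩ := hfac hx q hq
    rw [hk0.eq_of_tgt r 0, zero_comp]

lemma shift_mem_extClosure_of_hasNoSubobjectIn (hT : IsTStructure X Y) {S : Set C}
    (hSH : S ⊆ heart X Y) {a : C}
    (ha : a ∈ star (rPerp S ∩ heart X Y) (shiftSet (extClosure S) (-1)))
    (h : HasNoSubobjectIn X (rPerp S ∩ heart X Y) a) : a⟦(1 : ℤ)⟧ ∈ extClosure S := by
  obtain ⟨f, a', i, p, w, hf, ⟨t, ht, ⟨e⟩⟩, hD⟩ := ha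
  have hi : IsMonoWrt X i := isMonoWrt_mor₁ hD
    (hT.shift_mem_rPerp_of_mem_shiftSet_heart ⟨t, hT.extClosure_subset_heart hSH ht, ⟨e⟩⟩)
  have : IsIso p := (Triangle.isZero₁_iff_isIso₂ _ hD).1 (h hf i hi)
  exact ExtClosureP.iso _ _ ((shiftFunctorCompIsoId C (-1) 1 (by norm_num)).symm.app t ≪≫
    (shiftFunctor C 1).mapIso (e ≪≫ (asIso p).symm)) ht

end IsTStructure

/-- for each `s ∈ S`, `s[-1]` is simple in the right simple tilt
`K = (S^⊥ ∩ H) * ⟨S⟩[-1]`. -/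
theorem shifted_simples_are_simple {X Y : Set C} (hXY : IsLengthHeart X Y)
    {S : Set C} (hS : S ⊆ simplesOf (heart X Y)) :
    ∀ s ∈ S, IsSimpleIn
      (star (rPerp S ∩ heart X Y) (shiftSet (extClosure S) (-1)))
      ((shiftFunctor C (-1 : ℤ)).obj s) := by
  obtain ⟨hT, -, -⟩ := hXY
  have hSH : S ⊆ heart X Y := fun s hs => (hS hs).1
  have hK : star (rPerp S ∩ heart X Y) (shiftSet (extClosure S) (-1)) ⊆
      star (heart X Y) (shiftSet (heart X Y) (-1)) :=
    star_mono Set.inter_subset_right (shiftSet_mono (hT.extClosure_subset_heart hSH) _)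
  intro s hs
  have hs' : s⟦(-1 : ℤ)⟧ ∈ rPerp X := hT.shift_mem_rPerp_of_mem_heart (hSH hs) (by norm_num)
  refine ⟨mem_star_of_mem_right
      (fun z hz => ⟨fun _ _ f => hz.eq_of_tgt f 0, hT.mem_heart_of_isZero hz⟩)
      ⟨s, ExtClosureP.of s hs, ⟨Iso.refl _⟩⟩,
    fun h => (hS hs).2.1 (IsZero.of_full_of_faithful_of_isZero _ s h),
    fun a b f g w ha hb hD => ?_⟩
  have ha' : a⟦(1 : ℤ)⟧ ∈ extClosure S :=
    hT.shift_mem_extClosure_of_hasNoSubobjectIn hSH ha <|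
    (hasNoSubobjectIn_of_mem_rPerp (fun _ h => h.2.1) hs').of_isMonoWrt
      (isMonoWrt_mor₁ hD (hT.shift_mem_rPerp_of_mem_star (hK hb)))
  have hb' : b⟦(1 : ℤ)⟧ ∈ extClosure S :=
    hT.shift_mem_extClosure_of_hasNoSubobjectIn hSH hb <|
    (hT.hasNoSubobjectIn_of_mem_extClosure hS ha').of_isMonoWrt (isMonoWrt_mor₃ hD hs')
  exact ((hS hs).isZero_or_isZero (Triangle.shift_distinguished _ hD 1)
    ((shiftFunctorCompIsoId C (-1) 1 (by norm_num)).app s)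
    (hT.extClosure_subset_heart hSH ha') (hT.extClosure_subset_heart hSH hb')).imp
    (IsZero.of_full_of_faithful_of_isZero _ a) (IsZero.of_full_of_faithful_of_isZero _ b)

end SMPaper
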